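/- arXiv:1705.10022 — 2 statements merged into one kernel-verified Lean document; each statement's English description precedes it below -/
import Mathlib

section
/- Depth distribution of slabs via polynomial multiplication: let Γ be a box in R^d and B a finite family of boxes each of whose intersection with Γ is a slab (i.e., restricts Γ in at most one coordinate). Partition B into B_1, ..., B_d where B_i contains the slabs orthogonal to coordinate i, and for each i let V^i_j be the length of the set of x in the projection Γ_i of Γ to coordinate i covered by exactly j of the projected intervals of B_i, with V^i_0 the length of the uncovered part of Γ_i. Then for every k ∈ [0..n], the measure V_k of the set of points of Γ of depth exactly k in B equals the sum over all tuples (j_1,...,j_d) with j_1+...+j_d = k of the product V^1_{j_1} · V^2_{j_2} · ... · V^d_{j_d}; equivalently, V_k is the coefficient of x^k in the product of the polynomials P_i(x) = Σ_j V^i_j x^j. -/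
open MeasureTheory Set

/-- Depth of a point: number of boxes of the family containing it. -/
noncomputable def depth {d n : ℕ} (b : Fin n → Set (Fin d → ℝ)) (p : Fin d → ℝ) : ℕ :=
  Nat.card {i : Fin n // p ∈ b i}

/-- Depth distribution of slabs via polynomial multiplication: if every box of `B`
restricted to the domain `Γ = Icc g h` is a slab orthogonal to coordinate `σ j`
(restricting `Γ` by `α j ≤ x (σ j) ≤ β j`), then `V_k` equals the coefficient of `x^k`
in the product of the one-dimensional depth-distribution polynomials of the `d`
subfamilies, i.e. the convolution of the one-dimensional depth distributions. -/
theorem depth_distribution_slabs_convolution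
    (d n : ℕ) (g h : Fin d → ℝ)
    (b : Fin n → Set (Fin d → ℝ)) (σ : Fin n → Fin d) (α β : Fin n → ℝ)
    (hαβ : ∀ j, α j ≤ β j)
    (hslab : ∀ j, b j ∩ Set.Icc g h
      = {x ∈ Set.Icc g h | α j ≤ x (σ j) ∧ x (σ j) ≤ β j})
    (k : ℕ) :
    volume {p ∈ Set.Icc g h | depth b p = k}
      = ∑ J ∈ (Fintype.piFinset fun _ : Fin d => Finset.range (n + 1)).filter
            (fun J => ∑ i, J i = k),
          ∏ i : Fin d,
            volume {t ∈ Set.Icc (g i) (h i) |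
              Nat.card {j : Fin n // σ j = i ∧ α j ≤ t ∧ t ≤ β j} = J i} := by
  classical
  set f : Fin d → ℝ → ℕ :=
    fun i t => Nat.card {j : Fin n // σ j = i ∧ α j ≤ t ∧ t ≤ β j} with hfdef
  have hcardf : ∀ (P : Fin n → Prop) [DecidablePred P],
      Nat.card {j // P j} = (Finset.univ.filter P).card := by
    intro P _
    simp [Nat.card_eq_fintype_card, Fintype.card_subtype]
  -- f as a sum of indicators
  have hfsum : ∀ i t, f i t = ∑ j : Fin n,
      if σ j = i ∧ α j ≤ t ∧ t ≤ β j then 1 else 0 := by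
    intro i t
    show Nat.card {j : Fin n // σ j = i ∧ α j ≤ t ∧ t ≤ β j} = _
    rw [hcardf, Finset.card_filter]
  have hfmeas : ∀ i, Measurable (f i) := by
    intro i
    have : f i = fun t => ∑ j : Fin n,
        if σ j = i ∧ α j ≤ t ∧ t ≤ β j then (1:ℕ) else 0 := funext (hfsum i)
    rw [this]
    refine Finset.measurable_sum _ (fun j _ => ?_)
    refine Measurable.ite ?_ measurable_const measurable_const
    by_cases hji : σ j = i
    · have : {t : ℝ | σ j = i ∧ α j ≤ t ∧ t ≤ β j} = Set.Icc (α j) (β j) := by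
        ext t; simp [hji, Set.mem_Icc]
      rw [this]; exact measurableSet_Icc
    · have : {t : ℝ | σ j = i ∧ α j ≤ t ∧ t ≤ β j} = ∅ := by
        ext t; simp [hji]
      rw [this]; exact MeasurableSet.empty
  have hle : ∀ i t, f i t ≤ n := by
    intro i t
    show Nat.card {j : Fin n // σ j = i ∧ α j ≤ t ∧ t ≤ β j} ≤ n
    calc Nat.card {j : Fin n // σ j = i ∧ α j ≤ t ∧ t ≤ β j}
        = Fintype.card {j : Fin n // σ j = i ∧ α j ≤ t ∧ t ≤ β j} :=
          Nat.card_eq_fintype_card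
      _ ≤ Fintype.card (Fin n) := Fintype.card_subtype_le _
      _ = n := Fintype.card_fin n
  -- depth formula
  have hdepth : ∀ p ∈ Set.Icc g h, depth b p = ∑ i, f i (p i) := by
    intro p hp
    have hb : ∀ j, p ∈ b j ↔ α j ≤ p (σ j) ∧ p (σ j) ≤ β j := by
      intro j
      constructor
      · intro hpb
        have : p ∈ b j ∩ Set.Icc g h := ⟨hpb, hp⟩
        rw [hslab j] at this
        exact this.2
      · intro hj
        have : p ∈ {x ∈ Set.Icc g h | α j ≤ x (σ j) ∧ x (σ j) ≤ β j} := ⟨hp, hj⟩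
        rw [← hslab j] at this
        exact this.1
    have h1 : depth b p
        = (Finset.univ.filter (fun j => α j ≤ p (σ j) ∧ p (σ j) ≤ β j)).card := by
      unfold depth
      rw [hcardf]
      congr 1
      apply Finset.filter_congr
      intro j _
      simp [hb j]
    rw [h1, Finset.card_eq_sum_card_fiberwise
      (f := σ) (t := Finset.univ) (fun x _ => Finset.mem_univ _)]
    refine Finset.sum_congr rfl (fun i _ => ?_)
    rw [hfsum, Finset.card_filter]
    rw [Finset.sum_filter]
    refine Finset.sum_congr rfl (fun j _ => ?_)
    by_cases hji : σ j = i
    · simp [hji]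
    · simp [hji]
  -- the one-dimensional sets
  set S : Fin d → ℕ → Set ℝ := fun i m => {t ∈ Set.Icc (g i) (h i) | f i t = m} with hSdef
  have hSmeas : ∀ i m, MeasurableSet (S i m) := by
    intro i m
    have : S i m = Set.Icc (g i) (h i) ∩ (f i) ⁻¹' {m} := by
      ext t; simp [hSdef, Set.mem_Icc, and_comm]
    rw [this]
    exact measurableSet_Icc.inter ((hfmeas i) (measurableSet_singleton m))
  set F := (Fintype.piFinset fun _ : Fin d => Finset.range (n + 1)).filter
      (fun J => ∑ i, J i = k) with hFdef
  -- set decomposition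
  have hset : {p ∈ Set.Icc g h | depth b p = k}
      = ⋃ J ∈ F, Set.pi Set.univ (fun i => S i (J i)) := by
    ext p
    simp only [Set.mem_setOf_eq, Set.mem_iUnion, Set.mem_pi, Set.mem_univ,
      true_implies, exists_prop]
    constructor
    · rintro ⟨hp, hk⟩
      refine ⟨fun i => f i (p i), ?_, ?_⟩
      · rw [hFdef, Finset.mem_filter]
        refine ⟨Fintype.mem_piFinset.2 fun i =>
          Finset.mem_range.2 (Nat.lt_succ_of_le (hle i (p i))), ?_⟩
        rw [← hdepth p hp]; exact hk
      · intro i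
        exact ⟨⟨hp.1 i, hp.2 i⟩, rfl⟩
    · rintro ⟨J, hJ, hpJ⟩
      have hp : p ∈ Set.Icc g h :=
        ⟨fun i => (hpJ i).1.1, fun i => (hpJ i).1.2⟩
      refine ⟨hp, ?_⟩
      rw [hdepth p hp]
      have : ∑ i, f i (p i) = ∑ i, J i :=
        Finset.sum_congr rfl (fun i _ => (hpJ i).2)
      rw [this]
      exact (Finset.mem_filter.1 hJ).2
  rw [hset]
  rw [measure_biUnion_finset ?_ ?_]
  · refine Finset.sum_congr rfl (fun J _ => ?_)
    rw [volume_pi_pi]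
  · intro J hJ J' hJ' hne
    refine Set.disjoint_left.2 (fun p hp hp' => ?_)
    apply hne
    funext i
    have h1 := (hp i (Set.mem_univ i)).2
    have h2 := (hp' i (Set.mem_univ i)).2
    rw [← h1, ← h2]
  · intro J _
    exact MeasurableSet.pi Set.countable_univ (fun i _ => hSmeas i (J i))
end

section
/- Profile split bound: let B be a set of n boxes in R^d with d-th profile p (every hyperplane orthogonal to dimension i intersects at most p boxes of B for the chosen coordinate i). Sweeping coordinate i and cutting after every 2p endpoints partitions R into at most ⌈n/p⌉ + 1 slabs such that each slab's preimage region intersects at most 3p boxes of B. -/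
/-!
Sort the left endpoints and cut after every `p`-th one. A box meeting a slab either contains
one of its two boundary points (at most `p` boxes each, by the profile bound) or has its left
endpoint strictly inside the slab, and between two consecutive cuts lie at most `p` left endpoints.
-/

open Finset
open scoped Classical

/-- A bound `none` stands for `-∞` (below) or `+∞` (above). -/
def slab (lo hi : Option ℝ) : Set ℝ := {x | (∀ s ∈ lo, s ≤ x) ∧ ∀ t ∈ hi, x ≤ t}

def openSlab (lo hi : Option ℝ) : Set ℝ := {x | (∀ s ∈ lo, s < x) ∧ ∀ t ∈ hi, x < t}

lemma slab_eq_Icc_or_Iic_or_Ici_or_univ (lo hi : Option ℝ) :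
    (∃ s t : ℝ, slab lo hi = Set.Icc s t) ∨ (∃ t : ℝ, slab lo hi = Set.Iic t) ∨
      (∃ s : ℝ, slab lo hi = Set.Ici s) ∨ slab lo hi = Set.univ := by
  rcases lo with _ | s <;> rcases hi with _ | t
  · exact Or.inr <| Or.inr <| Or.inr <| by ext; simp [slab]
  · exact Or.inr <| Or.inl ⟨t, by ext; simp [slab]⟩
  · exact Or.inr <| Or.inr <| Or.inl ⟨s, by ext; simp [slab]⟩
  · exact Or.inl ⟨s, t, by ext; simp [slab]⟩

lemma exists_mem_slab (bd : ℕ → Option ℝ) (h₀ : bd 0 = none) {N : ℕ} (hN : bd (N + 1) = none)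
    (x : ℝ) : ∃ k ≤ N, x ∈ slab (bd k) (bd (k + 1)) := by
  have hex : ∃ k, ∀ t ∈ bd (k + 1), x ≤ t := ⟨N, by simp [hN]⟩
  refine ⟨Nat.find hex, Nat.find_min' hex (by simp [hN]), ?_, Nat.find_spec hex⟩
  intro s hs
  rcases Nat.eq_zero_or_pos (Nat.find hex) with h | h
  · simp [h, h₀] at hs
  · obtain ⟨t, ht, hxt⟩ : ∃ t ∈ bd (Nat.find hex - 1 + 1), t < x := by
      simpa using Nat.find_min hex (Nat.sub_one_lt_of_lt h)
    rw [Nat.sub_add_cancel h, hs, Option.mem_some_iff] at ht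
    exact ht ▸ hxt.le

lemma mem_or_mem_or_mem_openSlab_of_nonempty {a c : ℝ} {lo hi : Option ℝ}
    (h : (Set.Icc a c ∩ slab lo hi).Nonempty) :
    (∃ s ∈ lo, s ∈ Set.Icc a c) ∨ (∃ t ∈ hi, t ∈ Set.Icc a c) ∨ a ∈ openSlab lo hi := by
  obtain ⟨x, ⟨hax, hxc⟩, hlo, hhi⟩ := h
  by_cases hs : ∃ s ∈ lo, a ≤ s
  · obtain ⟨s, hs, has⟩ := hs
    exact Or.inl ⟨s, hs, has, (hlo s hs).trans hxc⟩
  by_cases ht : ∃ t ∈ hi, t ≤ c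
  · obtain ⟨t, ht, htc⟩ := ht
    exact Or.inr (Or.inl ⟨t, ht, hax.trans (hhi t ht), htc⟩)
  push Not at hs ht
  exact Or.inr (Or.inr ⟨hs, fun t ht' => hax.trans_lt (hxc.trans_lt (ht t ht'))⟩)

section Count

variable {ι : Type*} [Fintype ι] (a c : ι → ℝ)

lemma card_nonempty_inter_slab_le (lo hi : Option ℝ) :
    #{j | (Set.Icc (a j) (c j) ∩ slab lo hi).Nonempty} ≤
      #{j | ∃ s ∈ lo, s ∈ Set.Icc (a j) (c j)} + #{j | ∃ t ∈ hi, t ∈ Set.Icc (a j) (c j)} +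
        #{j | a j ∈ openSlab lo hi} := by
  calc _ ≤ #{j | (∃ s ∈ lo, s ∈ Set.Icc (a j) (c j)) ∨ (∃ t ∈ hi, t ∈ Set.Icc (a j) (c j)) ∨
          a j ∈ openSlab lo hi} :=
        card_le_card <| monotone_filter_right _ fun _ _ => mem_or_mem_or_mem_openSlab_of_nonempty
    _ ≤ _ := by
        rw [filter_or, filter_or, add_assoc]
        exact (Finset.card_union_le _ _).trans (Nat.add_le_add_left (Finset.card_union_le _ _) _)

lemma card_exists_mem_le {p : ℕ} (hprof : ∀ t, #{j | t ∈ Set.Icc (a j) (c j)} ≤ p) (o : Option ℝ) :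
    #{j | ∃ t ∈ o, t ∈ Set.Icc (a j) (c j)} ≤ p := by
  cases o with
  | none => simp
  | some t => simpa using hprof t

end Count

section Sorted

variable {n : ℕ}

/-- For sorted `y`, the cut just above its `i`-th smallest entry, counted from `1`. -/
def cutAfter (y : Fin n → ℝ) (i : ℕ) : Option ℝ :=
  if h : 0 < i ∧ i ≤ n then some (y ⟨i - 1, by omega⟩) else none

lemma cutAfter_zero (y : Fin n → ℝ) : cutAfter y 0 = none := by
  simp [cutAfter]

lemma cutAfter_of_lt (y : Fin n → ℝ) {i : ℕ} (hi : n < i) : cutAfter y i = none := by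
  simp [cutAfter, hi.not_ge]

lemma card_filter_val_mem_Ico_le (i i' : ℕ) : #{l : Fin n | (l : ℕ) ∈ Ico i i'} ≤ i' - i := by
  rw [← Nat.card_Ico]
  exact card_le_card_of_injOn (↑) (fun l hl => (mem_filter.1 hl).2) Fin.val_injective.injOn

lemma card_openSlab_cutAfter_le {y : Fin n → ℝ} (hy : Monotone y) {i i' : ℕ} (hi : i ≤ n)
    (hi' : 0 < i') : #{l | y l ∈ openSlab (cutAfter y i) (cutAfter y i')} ≤ i' - i := by
  refine (card_le_card fun l hl => ?_).trans (card_filter_val_mem_Ico_le i i')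
  simp only [mem_filter, mem_univ, true_and, mem_Ico] at hl ⊢
  obtain ⟨hlo, hhi⟩ := hl
  unfold cutAfter at hlo hhi
  constructor
  · split_ifs at hlo with h
    · have : i - 1 < (l : ℕ) := hy.reflect_lt (hlo _ rfl)
      omega
    · omega
  · split_ifs at hhi with h
    · have : (l : ℕ) < i' - 1 := hy.reflect_lt (hhi _ rfl)
      omega
    · omega

lemma card_openSlab_cutAfter_sort_le (a : Fin n → ℝ) {i i' : ℕ} (hi : i ≤ n) (hi' : 0 < i') :
    #{j | a j ∈ openSlab (cutAfter (a ∘ Tuple.sort a) i) (cutAfter (a ∘ Tuple.sort a) i')} ≤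
      i' - i :=
  (card_equiv (Tuple.sort a).symm fun j => by simp).trans_le
    (card_openSlab_cutAfter_le (Tuple.monotone_sort a) hi hi')

end Sorted

theorem profile_split_bound_general
    (n p : ℕ) (hp : 0 < p) (a c : Fin n → ℝ)
    (hprofile : ∀ t : ℝ, Nat.card {j : Fin n // a j ≤ t ∧ t ≤ c j} ≤ p) :
    ∃ (m : ℕ) (S : Fin m → Set ℝ),
      m ≤ (n + p - 1) / p + 1 ∧
      (⋃ k, S k) = Set.univ ∧
      (∀ k, (∃ s t : ℝ, S k = Set.Icc s t) ∨ (∃ t : ℝ, S k = Set.Iic t) ∨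
            (∃ s : ℝ, S k = Set.Ici s) ∨ S k = Set.univ) ∧
      ∀ k, Nat.card {j : Fin n // (Set.Icc (a j) (c j) ∩ S k).Nonempty} ≤ 3 * p := by
  set cut : ℕ → Option ℝ := fun k => cutAfter (a ∘ Tuple.sort a) (k * p)
  have hprof (t : ℝ) : #{j | t ∈ Set.Icc (a j) (c j)} ≤ p := by
    simpa [Nat.card_eq_fintype_card, Fintype.card_subtype] using hprofile t
  refine ⟨n / p + 1, fun k => slab (cut k) (cut (k + 1)),
    Nat.add_le_add_right (Nat.div_le_div_right (by omega)) 1, ?_, fun k => slab_eq_Icc_or_Iic_or_Ici_or_univ _ _,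
    fun k => ?_⟩
  · refine Set.iUnion_eq_univ_iff.2 fun x => ?_
    obtain ⟨k, hk, hx⟩ := exists_mem_slab cut (N := n / p) (by simp [cut, cutAfter_zero])
      (cutAfter_of_lt _ (by rw [add_mul, one_mul]; exact Nat.lt_div_mul_add hp)) x
    exact ⟨⟨k, Nat.lt_succ_of_le hk⟩, hx⟩
  · have hk : (k : ℕ) * p ≤ n :=
      (Nat.mul_le_mul_right p (Nat.lt_succ_iff.1 k.2)).trans (Nat.div_mul_le_self n p)
    rw [Nat.card_eq_fintype_card, Fintype.card_subtype]
    calc _ ≤ p + p + ((k + 1) * p - k * p) :=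
          (card_nonempty_inter_slab_le a c _ _).trans <| add_le_add (add_le_add
            (card_exists_mem_le a c hprof _) (card_exists_mem_le a c hprof _))
            (card_openSlab_cutAfter_sort_le a hk (Nat.mul_pos k.succ_pos hp))
      _ = 3 * p := by rw [add_mul, one_mul, Nat.add_sub_cancel_left]; ring

/-- Profile split bound (one coordinate): if every point of `ℝ` is contained in the
`i`-th coordinate intervals `[a j, c j]` of at most `p` of the `n` boxes, then `ℝ` can
be partitioned into at most `⌈n/p⌉ + 1` slabs (intervals), each of which intersects
the coordinate intervals of at most `3p` boxes. -/
theorem profile_split_bound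
    (n p : ℕ) (hp : 0 < p) (a c : Fin n → ℝ) (hac : ∀ j, a j ≤ c j)
    (hprofile : ∀ t : ℝ, Nat.card {j : Fin n // a j ≤ t ∧ t ≤ c j} ≤ p) :
    ∃ (m : ℕ) (S : Fin m → Set ℝ),
      m ≤ (n + p - 1) / p + 1 ∧
      (⋃ k, S k) = Set.univ ∧
      (∀ k, (∃ s t : ℝ, S k = Set.Icc s t) ∨ (∃ t : ℝ, S k = Set.Iic t) ∨
            (∃ s : ℝ, S k = Set.Ici s) ∨ S k = Set.univ) ∧
      ∀ k, Nat.card {j : Fin n // (Set.Icc (a j) (c j) ∩ S k).Nonempty} ≤ 3 * p :=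
  profile_split_bound_general n p hp a c hprofile
end
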